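/- arXiv:1703.01375 — 4 statements merged into one kernel-verified Lean document; each statement's English description precedes it below -/
import Mathlib

section
/- Let n ≥ 1, let V : (0,∞) → Matrix (Fin n) (Fin n) ℂ be locally integrable with V(x)† = V(x) for a.e. x, and fix k ∈ ℝ. Suppose f : (0,∞) → Matrix (Fin n) (Fin n) ℂ is twice continuously differentiable, satisfies -f''(x) + V(x)·f(x) = k²·f(x) for a.e. x > 0, and satisfies the Jost asymptotics e^{-ikx}f(x) → Iₙ and e^{-ikx}f'(x) → ik·Iₙ as x → ∞. Then for every x > 0 one has f(x)†·f'(x) - f'(x)†·f(x) = 2ik·Iₙ. -/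
/-!
The Wronskian `W = f† f' - f'† f` has derivative `f† f'' - f''† f`. Writing the equation as
`f'' = U f` with `U = V - k²` self-adjoint, this is `f† U f - (U f)† f = 0` almost everywhere;
being continuous, it vanishes identically, so `W` is constant on `(0, ∞)`. Since `|e^{-ikx}| = 1`,
`W` does not change when `f` and `f'` are both multiplied by `e^{-ikx}`, so the Jost asymptotics
give `W(x) → I† (ik I) - (ik I)† I = 2ik I` as `x → ∞`.
-/

open MeasureTheory Matrix Filter Topology Complex

attribute [local instance] Matrix.linftyOpNormedAddCommGroup Matrix.linftyOpNormedSpace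
  Matrix.linftyOpNormedRing Matrix.linftyOpNormedAlgebra

theorem is_const_of_hasDerivAt_of_ae_eq_zero {G : Type*} [NormedAddCommGroup G]
    [NormedSpace ℝ G] {s : Set ℝ} {g g' : ℝ → G} (hs : IsOpen s) (hs' : IsPreconnected s)
    (hg : ∀ x ∈ s, HasDerivAt g (g' x) x) (hg' : ContinuousOn g' s)
    (hg'0 : g' =ᵐ[volume.restrict s] 0) {x y : ℝ} (hx : x ∈ s) (hy : y ∈ s) :
    g x = g y := by
  have hzero : Set.EqOn g' 0 s := Measure.eqOn_open_of_ae_eq hg'0 hs hg' continuousOn_const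
  refine hs.is_const_of_deriv_eq_zero hs'
    (fun z hz => (hg z hz).differentiableAt.differentiableWithinAt) (fun z hz => ?_) hx hy
  rw [(hg z hz).deriv, hzero hz]

theorem star_mul_mul_sub_star_mul_mul_self {R : Type*} [Ring R] [StarRing R] {u : R}
    (hu : IsSelfAdjoint u) (a : R) : star a * (u * a) - star (u * a) * a = 0 := by
  rw [star_mul, hu.star_eq, mul_assoc, sub_self]

-- Mathlib's `ContinuousStar` instance for matrices is for the product topology, which is not
-- reducibly the topology of the `linfty` operator norm.
instance Matrix.linftyOpContinuousStar {m α : Type*} [Fintype m] [SeminormedAddCommGroup α]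
    [StarAddMonoid α] [ContinuousStar α] :
    @ContinuousStar (Matrix m m α)
      (Matrix.linftyOpSeminormedAddCommGroup (m := m) (n := m)).toUniformSpace.toTopologicalSpace
      _ :=
  ⟨(continuous_star : Continuous (star : Matrix m m α → Matrix m m α))⟩

section Wronskian

variable {A : Type*} [NormedRing A] [NormedAlgebra ℝ A] [StarRing A] [StarModule ℝ A]
  [ContinuousStar A]

/-- The Wronskian `[f†; f]` of the paper. -/
noncomputable def starWronskian (f : ℝ → A) (x : ℝ) : A :=
  star (f x) * deriv f x - star (deriv f x) * f x

theorem HasDerivAt.star_mul_sub_star_mul {f f' : ℝ → A} {f'' : A} {x : ℝ}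
    (hf : HasDerivAt f (f' x) x) (hf' : HasDerivAt f' f'' x) :
    HasDerivAt (fun y => star (f y) * f' y - star (f' y) * f y)
      (star (f x) * f'' - star f'' * f x) x :=
  ((hf.star.mul hf').sub (hf'.star.mul hf)).congr_deriv (by abel)

theorem starWronskian_eq_of_deriv_deriv_eq_mul {s : Set ℝ} (hs : IsOpen s)
    (hs' : IsPreconnected s) {f U : ℝ → A} (hf : ContDiffOn ℝ 2 f s)
    (hU : ∀ᵐ x ∂(volume.restrict s), IsSelfAdjoint (U x))
    (hode : ∀ᵐ x ∂(volume.restrict s), deriv (deriv f) x = U x * f x)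
    {x y : ℝ} (hx : x ∈ s) (hy : y ∈ s) : starWronskian f x = starWronskian f y := by
  have hf' : ContDiffOn ℝ 1 (deriv f) s := hf.deriv_of_isOpen hs (by norm_num)
  have hf'' : ContinuousOn (deriv (deriv f)) s := hf'.continuousOn_deriv_of_isOpen hs le_rfl
  refine is_const_of_hasDerivAt_of_ae_eq_zero hs hs'
    (g' := fun z => star (f z) * deriv (deriv f) z - star (deriv (deriv f) z) * f z)
    (fun z hz => ?_) ?_ ?_ hx hy
  · have hd : ∀ {g : ℝ → A}, ContDiffOn ℝ 1 g s → HasDerivAt g (deriv g z) z := fun hg =>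
      ((hg.differentiableOn one_ne_zero).differentiableAt (hs.mem_nhds hz)).hasDerivAt
    exact (hd (hf.of_le (by norm_num))).star_mul_sub_star_mul (hd hf')
  · exact (hf.continuousOn.star.mul hf'').sub (hf''.star.mul hf.continuousOn)
  · filter_upwards [hU, hode] with z hUz hz
    rw [hz]
    exact star_mul_mul_sub_star_mul_mul_self hUz (f z)

end Wronskian

theorem star_smul_mul_smul_of_norm_eq_one {A : Type*} [Ring A] [StarRing A] [Algebra ℂ A]
    [StarModule ℂ A] {z : ℂ} (hz : ‖z‖ = 1) (a b : A) :
    star (z • a) * (z • b) = star a * b := by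
  rw [star_smul, smul_mul_smul_comm, star_def, conj_mul', hz]
  simp

theorem tendsto_star_mul_sub_star_mul_of_tendsto_smul_one {α A : Type*} [NormedRing A]
    [NormedAlgebra ℂ A] [StarRing A] [StarModule ℂ A] [ContinuousStar A] {l : Filter α}
    {g g' : α → A} {c : ℂ} (hg : Tendsto g l (𝓝 1)) (hg' : Tendsto g' l (𝓝 (c • 1))) :
    Tendsto (fun x => star (g x) * g' x - star (g' x) * g x) l (𝓝 ((c - star c) • 1)) := by
  convert (hg.star.mul hg').sub (hg'.star.mul hg) using 2
  rw [star_one, star_smul, star_one, one_mul, smul_one_mul, sub_smul]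

theorem wronskian_relation_jost_general (n : ℕ)
    (V : ℝ → Matrix (Fin n) (Fin n) ℂ)
    (hVherm : ∀ᵐ x ∂(volume.restrict (Set.Ioi 0)), (V x)ᴴ = V x)
    (k : ℝ) (f : ℝ → Matrix (Fin n) (Fin n) ℂ)
    (hf : ContDiffOn ℝ 2 f (Set.Ioi 0))
    (hode : ∀ᵐ x ∂(volume.restrict (Set.Ioi 0)),
      -(deriv (deriv f) x) + V x * f x = ((k : ℂ) ^ 2) • f x)
    (hasymp : Tendsto (fun x : ℝ => Complex.exp (-(Complex.I * k * x)) • f x) atTop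
      (𝓝 (1 : Matrix (Fin n) (Fin n) ℂ)))
    (hasymp' : Tendsto (fun x : ℝ => Complex.exp (-(Complex.I * k * x)) • deriv f x) atTop
      (𝓝 ((Complex.I * k) • (1 : Matrix (Fin n) (Fin n) ℂ)))) :
    ∀ x : ℝ, 0 < x →
      (f x)ᴴ * deriv f x - (deriv f x)ᴴ * f x
        = (2 * Complex.I * k) • (1 : Matrix (Fin n) (Fin n) ℂ) := by
  intro x hx
  have hSchrodinger : ∀ᵐ y ∂(volume.restrict (Set.Ioi 0)),
      deriv (deriv f) y = (V y - ((k : ℂ) ^ 2) • 1) * f y := by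
    filter_upwards [hode] with y hy
    rw [Matrix.sub_mul, smul_one_mul, ← hy]
    abel
  have hSelfAdjoint : ∀ᵐ y ∂(volume.restrict (Set.Ioi 0)),
      IsSelfAdjoint (V y - ((k : ℂ) ^ 2) • (1 : Matrix (Fin n) (Fin n) ℂ)) := by
    filter_upwards [hVherm] with y hy
    exact IsSelfAdjoint.sub hy ((IsSelfAdjoint.pow (conj_ofReal k) 2).smul (.one _))
  have hconst : ∀ᶠ y in atTop, starWronskian f x = starWronskian f y := by
    filter_upwards [eventually_gt_atTop 0] with y hy
    exact starWronskian_eq_of_deriv_deriv_eq_mul isOpen_Ioi isPreconnected_Ioi hf hSelfAdjoint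
      hSchrodinger hx hy
  have hlim : Tendsto (starWronskian f) atTop (𝓝 ((2 * I * k) • 1)) := by
    have hscale (y : ℝ) : ‖exp (-(I * k * y))‖ = 1 := by simp [norm_exp]
    convert tendsto_star_mul_sub_star_mul_of_tendsto_smul_one hasymp hasymp' using 1
    · ext1 y
      simp only [star_smul_mul_smul_of_norm_eq_one (hscale y)]
      rfl
    · congr 2
      rw [star_def, map_mul, conj_I, conj_ofReal]
      ring
  exact tendsto_nhds_unique (tendsto_const_nhds.congr' hconst) hlim

/-- **Wronskian relation (10) of Proposition 2.1(c)**: for a self-adjoint locally integrable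
potential `V` on `(0,∞)` and a twice continuously differentiable solution `f` of the matrix
Schrödinger equation `-f'' + V f = k² f` with the Jost asymptotics
`e^{-ikx} f(x) → I` and `e^{-ikx} f'(x) → ik I` as `x → ∞`, one has
`f(x)† f'(x) - f'(x)† f(x) = 2ik I` for every `x > 0`. -/
theorem wronskian_relation_jost (n : ℕ) (hn : 1 ≤ n)
    (V : ℝ → Matrix (Fin n) (Fin n) ℂ)
    (hVloc : @LocallyIntegrableOn ℝ (Matrix (Fin n) (Fin n) ℂ) _ _ (_)
      SeminormedAddGroup.toContinuousENorm V (Set.Ioi 0) volume)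
    (hVherm : ∀ᵐ x ∂(volume.restrict (Set.Ioi 0)), (V x)ᴴ = V x)
    (k : ℝ) (f : ℝ → Matrix (Fin n) (Fin n) ℂ)
    (hf : ContDiffOn ℝ 2 f (Set.Ioi 0))
    (hode : ∀ᵐ x ∂(volume.restrict (Set.Ioi 0)),
      -(deriv (deriv f) x) + V x * f x = ((k : ℂ) ^ 2) • f x)
    (hasymp : Tendsto (fun x : ℝ => Complex.exp (-(Complex.I * k * x)) • f x) atTop
      (𝓝 (1 : Matrix (Fin n) (Fin n) ℂ)))
    (hasymp' : Tendsto (fun x : ℝ => Complex.exp (-(Complex.I * k * x)) • deriv f x) atTop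
      (𝓝 ((Complex.I * k) • (1 : Matrix (Fin n) (Fin n) ℂ)))) :
    ∀ x : ℝ, 0 < x →
      (f x)ᴴ * deriv f x - (deriv f x)ᴴ * f x
        = (2 * Complex.I * k) • (1 : Matrix (Fin n) (Fin n) ℂ) :=
  wronskian_relation_jost_general n V hVherm k f hf hode hasymp hasymp'
end

section
/- Let n ≥ 1, 0 ≤ n_D ≤ n, and let U, U₀, M ∈ Matrix (Fin n) (Fin n) ℂ with U and M unitary, U₀ unitary and Hermitian, M†·U₀·M = diag(I_{n-n_D}, -I_{n_D}) (block diagonal), (Iₙ - U₀)(U + Iₙ) = 0, and dim ker(U + Iₙ) = n_D (the eigenvalue -1 of U has multiplicity n_D). Then there exists a unitary (n-n_D)×(n-n_D) matrix X₁ such that X₁ + I_{n-n_D} is invertible, M†·U·M = diag(X₁, -I_{n_D}), and M†(Iₙ + U)M·T = diag(I_{n-n_D}, 0_{n_D}) for the invertible matrix T = diag((X₁+I_{n-n_D})^{-1}, (1/2)I_{n_D}). -/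
open Matrix

/-- **Converse direction of Proposition 2.3(d)**: if `U` is unitary, `U₀` is unitary Hermitian
with `M† U₀ M = diag(I_{n-n_D}, -I_{n_D})` for a unitary `M`, `(I - U₀)(U + I) = 0`, and the
eigenvalue `-1` of `U` has multiplicity `n_D`, then `M† U M = diag(X₁, -I_{n_D})` for some
unitary `X₁` with `X₁ + I` invertible, and `M†(I + U)M T = diag(I_{n-n_D}, 0)` for
`T = diag((X₁+I)⁻¹, (1/2)I)`. Here the index type `Fin m ⊕ Fin d` realizes the block
decomposition with `m = n - n_D` and `d = n_D`. -/
theorem boundary_matrix_block_form (m d : ℕ) (hn : 1 ≤ m + d)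
    (U U₀ M : Matrix (Fin m ⊕ Fin d) (Fin m ⊕ Fin d) ℂ)
    (hU : Uᴴ * U = 1) (hM : Mᴴ * M = 1)
    (hU₀unitary : U₀ᴴ * U₀ = 1) (hU₀herm : U₀ᴴ = U₀)
    (hU₀diag : Mᴴ * U₀ * M = Matrix.fromBlocks 1 0 0 (-1))
    (hrel : (1 - U₀) * (U + 1) = 0)
    (hker : Module.finrank ℂ (LinearMap.ker (U + 1).mulVecLin) = d) :
    ∃ X₁ : Matrix (Fin m) (Fin m) ℂ,
      X₁ᴴ * X₁ = 1 ∧ IsUnit (X₁ + 1) ∧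
      Mᴴ * U * M = Matrix.fromBlocks X₁ 0 0 (-1) ∧
      IsUnit (Matrix.fromBlocks (X₁ + 1)⁻¹ 0 0 ((2⁻¹ : ℂ) • (1 : Matrix (Fin d) (Fin d) ℂ))) ∧
      Mᴴ * (1 + U) * M *
          Matrix.fromBlocks (X₁ + 1)⁻¹ 0 0 ((2⁻¹ : ℂ) • (1 : Matrix (Fin d) (Fin d) ℂ))
        = Matrix.fromBlocks 1 0 0 0 := by
  have hMM' : M * Mᴴ = 1 := mul_eq_one_comm.mp hM
  have hMunit : IsUnit M := @isUnit_of_invertible _ _ M (invertibleOfRightInverse M Mᴴ hMM')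
  have hMdet : IsUnit M.det := (Matrix.isUnit_iff_isUnit_det M).mp hMunit
  have hMHdet : IsUnit Mᴴ.det := by rw [Matrix.det_conjTranspose]; exact hMdet.star
  set V := Mᴴ * U * M with hVdef
  have hVunit : Vᴴ * V = 1 := by
    calc Vᴴ * V = Mᴴ * (Uᴴ * ((M * Mᴴ) * (U * M))) := by
          simp [hVdef, conjTranspose_mul, Matrix.mul_assoc]
      _ = 1 := by rw [hMM', one_mul, ← Matrix.mul_assoc Uᴴ U, hU, one_mul, hM]
  have h1 : Mᴴ * (1 - U₀) * M = 1 - Matrix.fromBlocks 1 0 0 (-1) := by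
    rw [mul_sub, mul_one, sub_mul, hM, hU₀diag]
  have h2 : Mᴴ * (U + 1) * M = V + 1 := by
    rw [mul_add, mul_one, add_mul, hM]
  have hblock : (1 - Matrix.fromBlocks 1 0 0 (-1)) * (V + 1) = 0 := by
    rw [← h1, ← h2]
    calc Mᴴ * (1 - U₀) * M * (Mᴴ * (U + 1) * M)
        = Mᴴ * ((1 - U₀) * ((M * Mᴴ) * ((U + 1) * M))) := by simp [Matrix.mul_assoc]
      _ = 0 := by
          rw [hMM', one_mul, ← Matrix.mul_assoc (1 - U₀) (U + 1) M, hrel, Matrix.zero_mul, Matrix.mul_zero]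
  -- block decomposition of V
  set A := V.toBlocks₁₁ with hA
  set B := V.toBlocks₁₂ with hB
  set C := V.toBlocks₂₁ with hC
  set E := V.toBlocks₂₂ with hE
  have hV : V = Matrix.fromBlocks A B C E := (Matrix.fromBlocks_toBlocks V).symm
  have hD : (1 : Matrix (Fin m ⊕ Fin d) (Fin m ⊕ Fin d) ℂ) - Matrix.fromBlocks 1 0 0 (-1)
      = Matrix.fromBlocks 0 0 0 ((2 : ℂ) • (1 : Matrix (Fin d) (Fin d) ℂ)) := by
    rw [← Matrix.fromBlocks_one, sub_eq_add_neg, Matrix.fromBlocks_neg,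
      Matrix.fromBlocks_add]
    exact Matrix.fromBlocks_inj.mpr
      ⟨add_neg_cancel 1, by simp, by simp, by rw [neg_neg, two_smul]⟩
  have hVone : V + 1 = Matrix.fromBlocks (A + 1) B C (E + 1) := by
    rw [hV, ← Matrix.fromBlocks_one, Matrix.fromBlocks_add, add_zero, add_zero]
  have hblock2 : Matrix.fromBlocks (0 : Matrix (Fin m) (Fin m) ℂ) (0 : Matrix (Fin m) (Fin d) ℂ)
      ((2 : ℂ) • C) ((2 : ℂ) • (E + 1)) = Matrix.fromBlocks 0 0 0 0 := by
    rw [Matrix.fromBlocks_zero]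
    have := hblock
    rw [hD, hVone, Matrix.fromBlocks_multiply] at this
    simpa [Matrix.smul_mul, Matrix.mul_smul] using this
  rw [Matrix.fromBlocks_inj] at hblock2
  have hC0 : C = 0 := by
    have h := hblock2.2.2.1
    exact (smul_eq_zero.mp h).resolve_left (by norm_num)
  have hE1 : E = -1 := by
    have h0 : E + 1 = 0 := by
      have h := hblock2.2.2.2
      exact (smul_eq_zero.mp h).resolve_left (by norm_num)
    exact eq_neg_of_add_eq_zero_left h0
  have hVform : V = Matrix.fromBlocks A B 0 (-1) := by rw [hV, hC0, hE1]
  have hVV := hVunit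
  rw [hVform, Matrix.fromBlocks_conjTranspose, Matrix.fromBlocks_multiply] at hVV
  simp only [Matrix.conjTranspose_zero, Matrix.conjTranspose_neg, Matrix.conjTranspose_one,
    Matrix.mul_zero, Matrix.zero_mul, add_zero, zero_add, Matrix.neg_mul, Matrix.mul_neg,
    neg_neg, Matrix.mul_one, neg_zero, ← Matrix.fromBlocks_one, Matrix.fromBlocks_inj] at hVV
  obtain ⟨hAA, hAB, -, -⟩ := hVV
  have hAAH : A * Aᴴ = 1 := mul_eq_one_comm.mp hAA
  have hB0 : B = 0 := by
    calc B = A * Aᴴ * B := by rw [hAAH, Matrix.one_mul]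
      _ = A * (Aᴴ * B) := Matrix.mul_assoc _ _ _
      _ = 0 := by rw [hAB, Matrix.mul_zero]
  have hVdiag : V = Matrix.fromBlocks A 0 0 (-1) := by rw [hVform, hB0]
  -- rank / kernel dimension argument
  have hrank1 : (V + 1).rank = (U + 1).rank := by
    rw [← h2, Matrix.rank_mul_eq_left_of_isUnit_det M (Mᴴ * (U + 1)) hMdet,
      Matrix.rank_mul_eq_right_of_isUnit_det Mᴴ (U + 1) hMHdet]
  have hranknul : ∀ W : Matrix (Fin m ⊕ Fin d) (Fin m ⊕ Fin d) ℂ,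
      W.rank + Module.finrank ℂ (LinearMap.ker W.mulVecLin) = m + d := by
    intro W
    rw [Matrix.rank, show m + d = Module.finrank ℂ ((Fin m ⊕ Fin d) → ℂ) by simp]
    exact LinearMap.finrank_range_add_finrank_ker _
  have hrankU : (U + 1).rank = m := by
    have h := hranknul (U + 1); rw [hker] at h; omega
  have hkerV : Module.finrank ℂ (LinearMap.ker (V + 1).mulVecLin) = d := by
    have h := hranknul (V + 1); rw [hrank1, hrankU] at h; omega
  have hV1 : V + 1 = Matrix.fromBlocks (A + 1) 0 0 0 := by
    rw [hVone, hB0, hC0, hE1, neg_add_cancel]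
  -- the inclusion of the second block
  let f : (Fin d → ℂ) →ₗ[ℂ] ((Fin m ⊕ Fin d) → ℂ) :=
    { toFun := fun z => Sum.elim 0 z
      map_add' := fun x y => by funext i; cases i <;> simp
      map_smul' := fun c x => by funext i; cases i <;> simp }
  have hfinj : Function.Injective f := fun x y h => funext fun j => congrFun h (Sum.inr j)
  have hle : LinearMap.range f ≤ LinearMap.ker (V + 1).mulVecLin := by
    rintro _ ⟨z, rfl⟩
    simp only [LinearMap.mem_ker, Matrix.mulVecLin_apply]
    show (V + 1) *ᵥ (Sum.elim 0 z) = 0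
    rw [hV1, Matrix.fromBlocks_mulVec]
    funext i
    cases i <;> simp
  have hranges : LinearMap.range f = LinearMap.ker (V + 1).mulVecLin := by
    apply Submodule.eq_of_le_of_finrank_eq hle
    rw [hkerV, LinearMap.finrank_range_of_inj hfinj]
    simp
  have hAker : ∀ x : Fin m → ℂ, (A + 1) *ᵥ x = 0 → x = 0 := by
    intro x hx
    have hmem : (Sum.elim x 0 : Fin m ⊕ Fin d → ℂ) ∈ LinearMap.ker (V + 1).mulVecLin := by
      simp only [LinearMap.mem_ker, Matrix.mulVecLin_apply]
      show (V + 1) *ᵥ (Sum.elim x 0) = 0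
      rw [hV1, Matrix.fromBlocks_mulVec]
      funext i
      cases i <;> simp [hx]
    rw [← hranges] at hmem
    obtain ⟨z, hz⟩ := hmem
    funext i
    have := congrFun hz (Sum.inl i)
    simpa [f] using this.symm
  have hAinj : Function.Injective ((A + 1).mulVec) := by
    intro x y hxy
    have h0 : (A + 1) *ᵥ (x - y) = 0 := by rw [Matrix.mulVec_sub, hxy, sub_self]
    exact sub_eq_zero.mp (hAker _ h0)
  have hAunit : IsUnit (A + 1) := Matrix.mulVec_injective_iff_isUnit.mp hAinj
  have hAdet : IsUnit (A + 1).det := (Matrix.isUnit_iff_isUnit_det _).mp hAunit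
  refine ⟨A, hAA, hAunit, hVdiag, ?_, ?_⟩
  · refine @isUnit_of_invertible _ _ _ (invertibleOfRightInverse _
      (Matrix.fromBlocks (A + 1) 0 0 ((2 : ℂ) • 1)) ?_)
    rw [Matrix.fromBlocks_multiply]
    have hhalf : ((2 : ℂ)⁻¹ • (1 : Matrix (Fin d) (Fin d) ℂ)) * ((2 : ℂ) • 1) = 1 := by
      rw [Matrix.smul_mul, Matrix.mul_smul, smul_smul]
      norm_num
    simp [Matrix.nonsing_inv_mul _ hAdet, hhalf, Matrix.fromBlocks_one]
  · rw [show (1 : Matrix (Fin m ⊕ Fin d) (Fin m ⊕ Fin d) ℂ) + U = U + 1 from add_comm _ _,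
      h2, hV1, Matrix.fromBlocks_multiply]
    simp [Matrix.mul_nonsing_inv _ hAdet]
end

section
/- Let n ≥ 1 and G₀, G₁ ∈ Matrix (Fin n) (Fin n) ℂ satisfy G₀†·G₁ = G₁†·G₀ and suppose the matrix E := G₀†·G₀ + G₁†·G₁ is invertible (equivalently: no nonzero vector α ∈ ℂⁿ satisfies G₀α = 0 and G₁α = 0). Then the matrix G₀ + i·G₁ is invertible and the matrix U := (G₀ - i·G₁)·(G₀ + i·G₁)^{-1} is unitary, i.e. U†·U = Iₙ. -/
open Matrix

/-- **Core algebraic step of Theorem 5.2**: if `G₀† G₁ = G₁† G₀` and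
`E = G₀† G₀ + G₁† G₁` is invertible, then `G₀ + i G₁` is invertible and
`U = (G₀ - i G₁)(G₀ + i G₁)⁻¹` is unitary. -/
theorem recovered_boundary_matrix_unitary (n : ℕ) (hn : 1 ≤ n)
    (G₀ G₁ : Matrix (Fin n) (Fin n) ℂ)
    (hW : G₀ᴴ * G₁ = G₁ᴴ * G₀)
    (hE : IsUnit (G₀ᴴ * G₀ + G₁ᴴ * G₁)) :
    IsUnit (G₀ + Complex.I • G₁) ∧
      ((G₀ - Complex.I • G₁) * (G₀ + Complex.I • G₁)⁻¹)ᴴ *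
        ((G₀ - Complex.I • G₁) * (G₀ + Complex.I • G₁)⁻¹) = 1 := by
  set A := G₀ + Complex.I • G₁ with hAdef
  set B := G₀ - Complex.I • G₁ with hBdef
  have hconjI : (starRingEnd ℂ) Complex.I = -Complex.I := Complex.conj_I
  have hA : Aᴴ * A = G₀ᴴ * G₀ + G₁ᴴ * G₁ := by
    simp only [hAdef, conjTranspose_add, conjTranspose_smul, hconjI, add_mul, mul_add,
      smul_mul_assoc, mul_smul_comm, smul_smul, hW, neg_smul, Complex.I_mul_I, neg_neg,
      one_smul, neg_mul, Complex.star_def, smul_add, smul_sub, mul_neg]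
    match_scalars <;> simp [Complex.I_sq] <;> ring
  have hB : Bᴴ * B = G₀ᴴ * G₀ + G₁ᴴ * G₁ := by
    simp only [hBdef, conjTranspose_sub, conjTranspose_smul, hconjI, sub_mul, mul_sub,
      smul_mul_assoc, mul_smul_comm, smul_smul, hW, neg_smul, Complex.I_mul_I, neg_neg,
      one_smul, neg_mul, sub_neg_eq_add, add_mul, Complex.star_def, smul_add, smul_sub, mul_neg]
    match_scalars <;> simp [Complex.I_sq] <;> ring
  have hAunit : IsUnit A := by
    have h1 : IsUnit (Aᴴ * A) := hA ▸ hE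
    rw [Matrix.isUnit_iff_isUnit_det, Matrix.det_mul] at h1
    exact (Matrix.isUnit_iff_isUnit_det A).mpr (isUnit_of_mul_isUnit_right h1)
  refine ⟨hAunit, ?_⟩
  have hinv : A * A⁻¹ = 1 := Matrix.mul_nonsing_inv A ((Matrix.isUnit_iff_isUnit_det A).mp hAunit)
  calc (B * A⁻¹)ᴴ * (B * A⁻¹) = (A⁻¹)ᴴ * (Bᴴ * B) * A⁻¹ := by
        rw [conjTranspose_mul]; noncomm_ring
    _ = (A⁻¹)ᴴ * (Aᴴ * A) * A⁻¹ := by rw [hB, hA]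
    _ = (A * A⁻¹)ᴴ * (A * A⁻¹) := by rw [conjTranspose_mul]; noncomm_ring
    _ = 1 := by rw [hinv]; simp
end

section
/- Suppose F : [0,∞) → Matrix (Fin n) (Fin n) ℂ is differentiable on (0,∞) with F(x) → 0 as x → ∞, ∫₀^∞(1+x)‖F'(x)‖dx < ∞, and F(x)† = F(x) for all x ≥ 0, and suppose for each x ≥ 0 the homogeneous equation h(t) + ∫ₓ^∞h(s)F(s+t)ds = 0 has only the zero solution in L¹((x,∞); ℂⁿ). Let K(x,·) ∈ L¹((x,∞); Matrix (Fin n) (Fin n) ℂ) be the unique solution of the Marchenko equation F(x+y) + K(x,y) + ∫ₓ^∞K(x,t)F(t+y)dt = 0 (y ≥ x), and suppose x ↦ K(x,x) is differentiable. Then the reconstructed potential V(x) := -2·(d/dx)K(x,x) is self-adjoint: V(x)† = V(x) for a.e. x ≥ 0. -/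
/-!
Fix `z > 0` and write `k = K(z, ·)`, `W(y) = ∫_{(z,∞)} k(s) F(s + y) ds`, so that the Marchenko
equation reads `F(z + y) = -k(y) - W(y)` and `K(z, z) = -F(2z) - W(z)`. As `F` is Hermitian,
substituting the equation into `W(z) - W(z)† = ∫ k(t) F(t + z) - F(t + z) k(t)† dt` leaves
`∫ W k† - k W†`, and both terms are the double integral `∫∫ k(s) F(s + t) k(t)† ds dt` by Fubini,
since `F(s + t)` is symmetric in `s` and `t`. So `K(x, x)` is Hermitian for every `x > 0`, hence so
is its derivative.
-/

open MeasureTheory Matrix Filter Topology Complex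

attribute [local instance] Matrix.linftyOpNormedAddCommGroup Matrix.linftyOpNormedSpace
  Matrix.linftyOpNormedRing Matrix.linftyOpNormedAlgebra

theorem ContinuousOn.exists_norm_le_of_tendsto_atTop {E : Type*} [SeminormedAddGroup E]
    {f : ℝ → E} {a : ℝ} {l : E} (hf : ContinuousOn f (Set.Ici a))
    (hlim : Tendsto f atTop (𝓝 l)) : ∃ C, ∀ x, a ≤ x → ‖f x‖ ≤ C := by
  obtain ⟨N, hN⟩ := eventually_atTop.1 (hlim.norm.eventually (gt_mem_nhds (lt_add_one ‖l‖)))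
  obtain ⟨C, hC⟩ := (isCompact_Icc (a := a) (b := max a N)).exists_bound_of_continuousOn
    (hf.mono Set.Icc_subset_Ici_self)
  refine ⟨max C (‖l‖ + 1), fun x hx => ?_⟩
  rcases le_total x (max a N) with h | h
  · exact (hC x ⟨hx, h⟩).trans (le_max_left _ _)
  · exact (hN x ((le_max_right _ _).trans h)).le.trans (le_max_right _ _)

namespace MeasureTheory

variable {α β A : Type*} [MeasurableSpace α] [MeasurableSpace β] {μ : Measure α} {ν : Measure β}

theorem Integrable.mul_bdd_mul_prod [NormedRing A] {f : α → A} {g : β → A} {Φ : α × β → A}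
    {C : ℝ} (hf : Integrable f μ) (hg : Integrable g ν) (hΦ : AEStronglyMeasurable Φ (μ.prod ν))
    (hΦC : ∀ p, ‖Φ p‖ ≤ C) : Integrable (fun p => f p.1 * Φ p * g p.2) (μ.prod ν) := by
  refine ((hf.norm.mul_prod hg.norm).const_mul C).mono'
    ((hf.1.comp_fst.mul hΦ).mul hg.1.comp_snd) (ae_of_all _ fun p => ?_)
  calc ‖f p.1 * Φ p * g p.2‖ ≤ ‖f p.1‖ * ‖Φ p‖ * ‖g p.2‖ := norm_mul₃_le
    _ ≤ ‖f p.1‖ * C * ‖g p.2‖ := by gcongr; exact hΦC p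
    _ = C * (‖f p.1‖ * ‖g p.2‖) := by ring

variable [NormedRing A] [NormedAlgebra ℝ A] [StarRing A] [StarModule ℝ A] [ContinuousStar A]

theorem integral_star (f : α → A) : ∫ x, star (f x) ∂μ = star (∫ x, f x ∂μ) :=
  (starL' ℝ : A ≃L[ℝ] A).integral_comp_comm f

theorem Integrable.star {f : α → A} (hf : Integrable f μ) : Integrable (fun x => star (f x)) μ :=
  ((starL' ℝ : A ≃L[ℝ] A) : A →L[ℝ] A).integrable_comp hf

theorem isSelfAdjoint_integral_mul_of_eq_neg_sub_integral [SFinite μ] {k g : α → A}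
    {Φ : α → α → A} (hΦ_symm : ∀ s t, Φ s t = Φ t s) (hΦ : ∀ s t, IsSelfAdjoint (Φ s t))
    (hg_sa : ∀ t, IsSelfAdjoint (g t)) (hg : ∀ᵐ t ∂μ, g t = -k t - ∫ s, k s * Φ s t ∂μ)
    (hkΦ : ∀ t, Integrable (fun s => k s * Φ s t) μ) (hkg : Integrable (fun t => k t * g t) μ)
    (hkΦk : Integrable (fun p : α × α => k p.1 * Φ p.1 p.2 * star (k p.2)) (μ.prod μ)) :
    IsSelfAdjoint (∫ t, k t * g t ∂μ) := by
  set w : α → A := fun t => ∫ s, k s * Φ s t ∂μ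
  have hw_left : ∀ t, w t * star (k t) = ∫ s, k s * Φ s t * star (k t) ∂μ :=
    fun t => (integral_mul_const_of_integrable (hkΦ t)).symm
  have hw_right : ∀ t, k t * star (w t) = ∫ s, k t * Φ t s * star (k s) ∂μ := by
    intro t
    rw [← integral_star, ← integral_const_mul_of_integrable (hkΦ t).star]
    simp_rw [star_mul, (hΦ _ _).star_eq, hΦ_symm _ t, mul_assoc]
  have hpt : ∀ᵐ t ∂μ, k t * g t - star (k t * g t) = w t * star (k t) - k t * star (w t) := by
    filter_upwards [hg] with t ht
    calc k t * g t - star (k t * g t) = k t * star (g t) - g t * star (k t) := by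
          rw [star_mul, (hg_sa t).star_eq]
      _ = k t * star (-k t - w t) - (-k t - w t) * star (k t) := by rw [ht]
      _ = w t * star (k t) - k t * star (w t) := by rw [star_sub, star_neg]; noncomm_ring
  have hswap : ∫ t, w t * star (k t) ∂μ = ∫ t, k t * star (w t) ∂μ := by
    simp_rw [hw_left, hw_right]
    exact (integral_integral_swap hkΦk).symm
  rw [IsSelfAdjoint, eq_comm, ← sub_eq_zero, ← integral_star, ← integral_sub hkg hkg.star,
    integral_congr_ae hpt, integral_sub, hswap, sub_self]
  · simpa only [hw_left] using hkΦk.integral_prod_right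
  · simpa only [hw_right] using hkΦk.integral_prod_left

end MeasureTheory

section StarAlgebra

variable {A : Type*} [NormedRing A] [NormedAlgebra ℝ A] [StarRing A] [StarModule ℝ A]
  [ContinuousStar A]

theorem isSelfAdjoint_deriv_of_eventually {f : ℝ → A} {x : ℝ}
    (hf : ∀ᶠ y in 𝓝 x, IsSelfAdjoint (f y)) : IsSelfAdjoint (deriv f x) := by
  rw [IsSelfAdjoint, ← deriv.star]
  exact Filter.EventuallyEq.deriv_eq (hf.mono fun y hy => hy.star_eq)

theorem isSelfAdjoint_diag_of_marchenko {F : ℝ → A} {K : ℝ → ℝ → A} {l : A} {z : ℝ}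
    (hz : 0 ≤ z) (hF_cont : ContinuousOn F (Set.Ici z)) (hF_lim : Tendsto F atTop (𝓝 l))
    (hF : ∀ x, z ≤ x → IsSelfAdjoint (F x)) (hK : IntegrableOn (K z) (Set.Ioi z))
    (hKeq : ∀ y, z ≤ y → F (z + y) + K z y + ∫ t in Set.Ioi z, K z t * F (t + y) = 0) :
    IsSelfAdjoint (K z z) := by
  obtain ⟨C, hC⟩ := hF_cont.exists_norm_le_of_tendsto_atTop hF_lim
  -- The equation on `(z, ∞)` only sees `F` on `[z, ∞)`; extending it by the constant `F z`
  -- makes it continuous, bounded and self-adjoint everywhere.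
  set G : ℝ → A := fun x => F (max z x)
  have hG_eq : ∀ x, z ≤ x → G x = F x := fun x hx => by simp only [G, max_eq_right hx]
  have hG_cont : Continuous G :=
    hF_cont.comp_continuous (continuous_const.max continuous_id) fun x => le_max_left z x
  have hG_bdd : ∀ x, ‖G x‖ ≤ C := fun x => hC _ (le_max_left z x)
  have hG_sa : ∀ x, IsSelfAdjoint (G x) := fun x => hF _ (le_max_left z x)
  have hKeq' : ∀ y, z ≤ y → K z y = -G (z + y) - ∫ t in Set.Ioi z, K z t * G (t + y) := by
    intro y hy
    have hint : ∫ t in Set.Ioi z, K z t * G (t + y) = ∫ t in Set.Ioi z, K z t * F (t + y) :=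
      setIntegral_congr_fun measurableSet_Ioi fun t (ht : z < t) => by
        rw [hG_eq _ (by linarith)]
    rw [hint, hG_eq _ (by linarith), ← sub_eq_zero, ← hKeq y hy]
    abel
  have hG_shift : ∀ y, AEStronglyMeasurable (fun t => G (t + y)) (volume.restrict (Set.Ioi z)) :=
    fun y => (hG_cont.comp (continuous_add_const y)).aestronglyMeasurable
  rw [hKeq' z le_rfl]
  refine (hG_sa _).neg.sub (isSelfAdjoint_integral_mul_of_eq_neg_sub_integral
    (Φ := fun s t => G (s + t)) (fun s t => by rw [add_comm]) (fun _ _ => hG_sa _)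
    (fun _ => hG_sa _) ?_ (fun t => hK.mul_bdd (hG_shift t) (ae_of_all _ fun _ => hG_bdd _))
    (hK.mul_bdd (hG_shift z) (ae_of_all _ fun _ => hG_bdd _))
    (hK.mul_bdd_mul_prod hK.star (hG_cont.comp continuous_add).aestronglyMeasurable
      fun _ => hG_bdd _))
  filter_upwards [self_mem_ae_restrict measurableSet_Ioi] with t (ht : z < t)
  rw [hKeq' t ht.le, add_comm z t]
  abel

end StarAlgebra

theorem reconstructed_potential_selfadjoint_general (n : ℕ)
    (F : ℝ → Matrix (Fin n) (Fin n) ℂ)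
    (hFdiff : ∀ x ∈ Set.Ioi (0 : ℝ), DifferentiableAt ℝ F x)
    (hFlim : Tendsto F atTop (𝓝 0))
    (hFherm : ∀ x : ℝ, 0 ≤ x → (F x)ᴴ = F x)
    (K : ℝ → ℝ → Matrix (Fin n) (Fin n) ℂ)
    (hKint : ∀ x : ℝ, 0 ≤ x →
      @IntegrableOn _ _ _ _ SeminormedAddGroup.toContinuousENorm (K x) (Set.Ioi x) volume)
    (hKeq : ∀ x : ℝ, 0 ≤ x → ∀ y : ℝ, x ≤ y →
      F (x + y) + K x y + ∫ t in Set.Ioi x, K x t * F (t + y) = 0) :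
    ∀ᵐ x ∂(volume.restrict (Set.Ioi 0)),
      ((-2 : ℂ) • deriv (fun y => K y y) x)ᴴ = (-2 : ℂ) • deriv (fun y => K y y) x := by
  -- The `L∞`-operator norm topology is the product topology only up to unfolding, so instance
  -- search does not find `ContinuousStar` for it.
  have : @ContinuousStar (Matrix (Fin n) (Fin n) ℂ)
      (@UniformSpace.toTopologicalSpace _ PseudoMetricSpace.toUniformSpace) _ :=
    ⟨(continuous_star : Continuous (star : Matrix (Fin n) (Fin n) ℂ → _))⟩
  have hdiag : ∀ z, 0 < z → IsSelfAdjoint (K z z) := fun z hz =>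
    isSelfAdjoint_diag_of_marchenko hz.le
      (fun x hx => (hFdiff x (hz.trans_le hx)).continuousAt.continuousWithinAt) hFlim
      (fun x hx => hFherm x (hz.le.trans hx)) (hKint z hz.le) (hKeq z hz.le)
  filter_upwards [self_mem_ae_restrict measurableSet_Ioi] with x (hx : 0 < x)
  exact (IsSelfAdjoint.ofNat 2).neg.smul
    (isSelfAdjoint_deriv_of_eventually ((eventually_gt_nhds hx).mono hdiag))

/-- **Self-adjointness part of Theorem 5.2**: if the Hermitian matrix function `F` satisfies
the regularity and decay conditions (II), the associated homogeneous Marchenko equation has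
only the zero solution in `L¹`, and `K(x,·)` is the (unique) `L¹` solution of the Marchenko
equation with `x ↦ K(x,x)` differentiable, then the reconstructed potential
`V(x) = -2 (d/dx) K(x,x)` is self-adjoint a.e. -/
theorem reconstructed_potential_selfadjoint (n : ℕ) (hn : 1 ≤ n)
    (F : ℝ → Matrix (Fin n) (Fin n) ℂ)
    (hFdiff : ∀ x ∈ Set.Ioi (0 : ℝ), DifferentiableAt ℝ F x)
    (hFlim : Tendsto F atTop (𝓝 0))
    (hF'int : IntegrableOn (fun x => (1 + x) * ‖deriv F x‖) (Set.Ioi 0))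
    (hFherm : ∀ x : ℝ, 0 ≤ x → (F x)ᴴ = F x)
    (huniq : ∀ x : ℝ, 0 ≤ x → ∀ h : ℝ → Fin n → ℂ, IntegrableOn h (Set.Ioi x) →
      (∀ᵐ t ∂(volume.restrict (Set.Ioi x)),
        h t + ∫ s in Set.Ioi x, Matrix.vecMul (h s) (F (s + t)) = 0) →
      (∀ᵐ t ∂(volume.restrict (Set.Ioi x)), h t = 0))
    (K : ℝ → ℝ → Matrix (Fin n) (Fin n) ℂ)
    (hKint : ∀ x : ℝ, 0 ≤ x →
      @IntegrableOn _ _ _ _ SeminormedAddGroup.toContinuousENorm (K x) (Set.Ioi x) volume)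
    (hKeq : ∀ x : ℝ, 0 ≤ x → ∀ y : ℝ, x ≤ y →
      F (x + y) + K x y + ∫ t in Set.Ioi x, K x t * F (t + y) = 0)
    (hKdiff : ∀ x : ℝ, 0 ≤ x → DifferentiableAt ℝ (fun y => K y y) x) :
    ∀ᵐ x ∂(volume.restrict (Set.Ioi 0)),
      ((-2 : ℂ) • deriv (fun y => K y y) x)ᴴ = (-2 : ℂ) • deriv (fun y => K y y) x :=
  reconstructed_potential_selfadjoint_general n F hFdiff hFlim hFherm K hKint hKeq
end
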